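/- arXiv:2306.00497 — 5 statements merged into one kernel-verified Lean document; each statement's English description precedes it below -/
import Mathlib

section
/- In the defiant case, the risk with recourse of the Bayes-optimal classifier satisfies R_Q(f*) = P(B=1, f*(X₀) = −1, Y = −1) − P(B=1, f*(X₀) = −1, Y = +1) + R_P(f*), and consequently R_Q(f*) ≥ R_P(f*), with strict inequality if P(B=1, f*(X₀) = −1) > 0 and P(Y=−1|X₀) > P(Y=+1|X₀) almost surely on {f* = −1}. -/
/-!
Recourse only acts on `{f = -1}`, where it moves a fraction `r` of the points to the positive
side; there the conditional loss `η` becomes `r (1 - η) + (1 - r) η`, so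
`R_Q - R_P = ∫_{f = -1} r (1 - 2η)`. The Bayes classifier predicts `-1` only where `η < 1/2`,
so this integrand is nonnegative, and it is positive wherever `r` is.
-/

open Set MeasureTheory Function

lemma setIntegral_mul_pos {α : Type*} [MeasurableSpace α] {μ : Measure α} {s : Set α}
    (hs : MeasurableSet s) {r c : α → ℝ}
    (hr : ∀ x ∈ s, 0 ≤ r x) (hc : ∀ x ∈ s, 0 < c x)
    (hrc : IntegrableOn (fun x ↦ r x * c x) s μ) (hpos : 0 < ∫ x in s, r x ∂μ) :
    0 < ∫ x in s, r x * c x ∂μ := by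
  have hri : IntegrableOn r s μ := Integrable.of_integral_ne_zero hpos.ne'
  have hsupp : support (fun x ↦ r x * c x) ∩ s = support r ∩ s :=
    Set.ext fun x ↦ and_congr_left fun hx ↦ by simp [mem_support, (hc x hx).ne']
  rw [setIntegral_pos_iff_support_of_nonneg_ae (ae_restrict_of_forall_mem hs hr) hri] at hpos
  rw [setIntegral_pos_iff_support_of_nonneg_ae
    (ae_restrict_of_forall_mem hs fun x hx ↦ mul_nonneg (hr x hx) (hc x hx).le) hrc, hsupp]
  exact hpos

lemma recourse_loss_eq_add_indicator {α : Type*} {η r : α → ℝ} {f : α → ℤ} {x : α}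
    (hfx : f x = 1 ∨ f x = -1) :
    (if f x = 1 then 1 - η x else r x * (1 - η x) + (1 - r x) * η x)
      = (if f x = 1 then 1 - η x else η x)
        + {x | f x = -1}.indicator (fun x ↦ r x * (1 - 2 * η x)) x := by
  rcases hfx with hfx | hfx
  · simp [hfx]
  · simp only [hfx, mem_ofPred_eq, indicator_of_mem, reduceCtorEq, if_false]
    ring

section

variable {α : Type*} [MeasurableSpace α] {P : Measure α} [IsFiniteMeasure P] {η r : α → ℝ}

lemma integrable_of_forall_mem_Icc {u : α → ℝ} (hu : Measurable u) (a b : ℝ)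
    (h : ∀ x, u x ∈ Icc a b) : Integrable u P :=
  Integrable.of_mem_Icc a b hu.aemeasurable (ae_of_all _ h)

lemma integrable_mul_one_sub_of_mem_Icc (hη : Measurable η) (hr : Measurable r)
    (hη01 : ∀ x, η x ∈ Icc 0 1) (hr01 : ∀ x, r x ∈ Icc 0 1) :
    Integrable (fun x ↦ r x * (1 - η x)) P :=
  integrable_of_forall_mem_Icc (by fun_prop) 0 1 fun x ↦ by
    obtain ⟨_, _⟩ := hη01 x; obtain ⟨_, _⟩ := hr01 x; constructor <;> nlinarith

lemma integrable_mul_of_mem_Icc (hη : Measurable η) (hr : Measurable r)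
    (hη01 : ∀ x, η x ∈ Icc 0 1) (hr01 : ∀ x, r x ∈ Icc 0 1) :
    Integrable (fun x ↦ r x * η x) P :=
  integrable_of_forall_mem_Icc (by fun_prop) 0 1 fun x ↦ by
    obtain ⟨_, _⟩ := hη01 x; obtain ⟨_, _⟩ := hr01 x; constructor <;> nlinarith

lemma integral_recourse_loss {f : α → ℤ} (hη : Measurable η) (hr : Measurable r)
    (hf : Measurable f) (hη01 : ∀ x, η x ∈ Icc 0 1) (hr01 : ∀ x, r x ∈ Icc 0 1)
    (hpm : ∀ x, f x = 1 ∨ f x = -1) :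
    ∫ x, (if f x = 1 then 1 - η x else r x * (1 - η x) + (1 - r x) * η x) ∂P
      = (∫ x, (if f x = 1 then 1 - η x else η x) ∂P)
        + ∫ x in {x | f x = -1}, r x * (1 - 2 * η x) ∂P := by
  have hS : MeasurableSet {x | f x = -1} := hf (measurableSet_singleton _)
  have hloss : Integrable (fun x ↦ if f x = 1 then 1 - η x else η x) P :=
    integrable_of_forall_mem_Icc (Measurable.ite (hf (measurableSet_singleton 1))
      (by fun_prop) hη) 0 1 fun x ↦ by
        obtain ⟨_, _⟩ := hη01 x; split_ifs <;> constructor <;> linarith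
  have hgap : Integrable (fun x ↦ r x * (1 - 2 * η x)) P :=
    integrable_of_forall_mem_Icc (by fun_prop) (-1) 1 fun x ↦ by
      obtain ⟨_, _⟩ := hη01 x; obtain ⟨_, _⟩ := hr01 x; constructor <;> nlinarith
  rw [← integral_indicator hS, ← integral_add hloss (hgap.indicator hS)]
  exact integral_congr_ae (ae_of_all _ fun x ↦ recourse_loss_eq_add_indicator (hpm x))

end

/-- defiant case, Bayes-optimal classifier.  The data distribution on
features is `P`, `η x = P(Y=1|X₀=x)`, `r x = P(B=1|X₀=x)` and `f` is the Bayes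
classifier.  The risk with recourse equals
`P(B=1,f=-1,Y=-1) - P(B=1,f=-1,Y=+1) + R_P`, hence `R_Q ≥ R_P`, strictly when
`P(B=1,f=-1) > 0` and `P(Y=-1|X₀) > P(Y=+1|X₀)` a.s. on `{f = -1}`. -/
theorem stmt_2 {α : Type*} [MeasurableSpace α] (P : Measure α) [IsProbabilityMeasure P]
    (η r : α → ℝ) (f : α → ℤ)
    (hη : Measurable η) (hr : Measurable r) (hf : Measurable f)
    (hη01 : ∀ x, η x ∈ Set.Icc (0:ℝ) 1) (hr01 : ∀ x, r x ∈ Set.Icc (0:ℝ) 1)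
    (hBayes : ∀ x, f x = if (1:ℝ)/2 ≤ η x then 1 else -1)
    (RP RQ : ℝ)
    (hRP : RP = ∫ x, (if f x = 1 then 1 - η x else η x) ∂P)
    (hRQ : RQ = ∫ x, (if f x = 1 then 1 - η x
        else r x * (1 - η x) + (1 - r x) * η x) ∂P) :
    (RQ = (∫ x in {x | f x = -1}, r x * (1 - η x) ∂P)
          - (∫ x in {x | f x = -1}, r x * η x ∂P) + RP
      ∧ RP ≤ RQ)
    ∧ ((0 < ∫ x in {x | f x = -1}, r x ∂P) →
        (∀ᵐ x ∂P, f x = -1 → η x < 1/2) → RP < RQ) := by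
  set S := {x | f x = -1}
  have hS : MeasurableSet S := hf (measurableSet_singleton _)
  have hpm : ∀ x, f x = 1 ∨ f x = -1 := fun x ↦ by rw [hBayes x]; split_ifs <;> simp
  have hlt : ∀ x ∈ S, η x < 1 / 2 := fun x (hx : f x = -1) ↦
    not_le.mp fun h ↦ by rw [hBayes x, if_pos h] at hx; exact absurd hx (by decide)
  have hpos_part := integrable_mul_one_sub_of_mem_Icc (P := P) hη hr hη01 hr01
  have hneg_part := integrable_mul_of_mem_Icc (P := P) hη hr hη01 hr01
  have hgap : ∫ x in S, r x * (1 - 2 * η x) ∂P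
      = (∫ x in S, r x * (1 - η x) ∂P) - ∫ x in S, r x * η x ∂P := by
    rw [← integral_sub hpos_part.integrableOn hneg_part.integrableOn]
    exact integral_congr_ae (ae_of_all _ fun x ↦ by ring)
  have hdiff : RQ = RP + ∫ x in S, r x * (1 - 2 * η x) ∂P := by
    rw [hRQ, hRP, integral_recourse_loss hη hr hf hη01 hr01 hpm]
  have hgap_nonneg : 0 ≤ ∫ x in S, r x * (1 - 2 * η x) ∂P :=
    setIntegral_nonneg hS fun x hx ↦ mul_nonneg (hr01 x).1 (by linarith [hlt x hx])
  refine ⟨⟨by linarith, by linarith⟩, fun hpos _ ↦ ?_⟩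
  have hgap_int : IntegrableOn (fun x ↦ r x * (1 - 2 * η x)) S P :=
    (hpos_part.sub hneg_part).integrableOn.congr_fun
      (fun x _ ↦ by dsimp only [Pi.sub_apply]; ring) hS
  have := setIntegral_mul_pos hS (fun x _ ↦ (hr01 x).1)
    (fun x hx ↦ by linarith [hlt x hx]) hgap_int hpos
  linarith
end

section
/- In the compliant case, the risk with recourse of the Bayes-optimal classifier satisfies R_Q(f*) = (1/2)P(B=1, f*(X₀) = −1) − P(B=1, f*(X₀) = −1, Y = +1) + R_P(f*), and hence R_Q(f*) ≥ R_P(f*), with strict inequality if P(B=1, f*(X₀)=−1) > 0 and P(Y=+1|X₀) < 1/2 on a set of positive probability within {f* = −1, B=1}. -/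
/-!
On the negative class the compliant recourse replaces the loss `η x` by
`r x · (1 - η (φ x)) + (1 - r x) · η x`, and `η (φ x) = 1/2` turns the difference into
`r x · (1/2 - η x)`. So `R_Q - R_P` is the integral of `r · (1/2 - η)` over `{f = -1}`,
where the Bayes rule forces `η < 1/2`: the gap is nonnegative, and it vanishes only if
`r = 0` almost everywhere on `{f = -1}`.
-/

open Set MeasureTheory

section BayesClassifier

variable {α : Type*} {η : α → ℝ} {f : α → ℤ}

lemma bayes_eq_neg_one_iff (hBayes : ∀ x, f x = if (1:ℝ)/2 ≤ η x then 1 else -1) (x : α) :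
    f x = -1 ↔ η x < 1/2 := by
  rw [hBayes x]
  split_ifs with h
  · exact ⟨by norm_num, fun hlt ↦ absurd h (not_le.2 hlt)⟩
  · exact ⟨fun _ ↦ not_le.1 h, fun _ ↦ rfl⟩

lemma bayes_eq_one_or_eq_neg_one (hBayes : ∀ x, f x = if (1:ℝ)/2 ≤ η x then 1 else -1) (x : α) :
    f x = 1 ∨ f x = -1 := by
  rw [hBayes x]
  split_ifs <;> simp

lemma measurable_bayes [MeasurableSpace α] (hη : Measurable η)
    (hBayes : ∀ x, f x = if (1:ℝ)/2 ≤ η x then 1 else -1) : Measurable f := by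
  rw [funext hBayes]
  exact Measurable.ite (measurableSet_le measurable_const hη) measurable_const measurable_const

end BayesClassifier

lemma compliant_loss_eq_add_indicator {α : Type*} {η r : α → ℝ} {f : α → ℤ} {φ : α → α} {x : α}
    (hfx : f x = 1 ∨ f x = -1) (hφx : f x = -1 → η (φ x) = 1/2) :
    (if f x = 1 then 1 - η x else r x * (1 - η (φ x)) + (1 - r x) * η x)
      = (if f x = 1 then 1 - η x else η x)
        + {x | f x = -1}.indicator (fun x ↦ r x * (1/2 - η x)) x := by
  rcases hfx with hpos | hneg
  · have hx : x ∉ {x | f x = -1} := by simp [hpos]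
    simp [hpos, hx]
  · have hx : x ∈ {x | f x = -1} := hneg
    simp only [hneg, indicator_of_mem hx, hφx hneg, show (-1 : ℤ) ≠ 1 by decide, if_false]
    ring

lemma integral_mul_pos_of_integral_pos {α : Type*} [MeasurableSpace α] {μ : Measure α}
    {r g : α → ℝ} (hr : 0 ≤ᵐ[μ] r) (hg : ∀ᵐ x ∂μ, 0 < g x)
    (hrg : Integrable (fun x ↦ r x * g x) μ) (h : 0 < ∫ x, r x ∂μ) :
    0 < ∫ x, r x * g x ∂μ := by
  have hrg0 : 0 ≤ᵐ[μ] fun x ↦ r x * g x := by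
    filter_upwards [hr, hg] with x hrx hgx using mul_nonneg hrx hgx.le
  refine (integral_nonneg_of_ae hrg0).lt_of_ne fun hzero ↦ h.ne' ?_
  have hrg_zero := (integral_eq_zero_iff_of_nonneg_ae hrg0 hrg).1 hzero.symm
  refine integral_eq_zero_of_ae ?_
  filter_upwards [hrg_zero, hg] with x hx hgx
  exact (mul_eq_zero.1 hx).resolve_right hgx.ne'

lemma integral_mul_const_sub {α : Type*} [MeasurableSpace α] {μ : Measure α} {r η : α → ℝ}
    (hr : Integrable r μ) (hrη : Integrable (fun x ↦ r x * η x) μ) (c : ℝ) :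
    ∫ x, r x * (c - η x) ∂μ = c * ∫ x, r x ∂μ - ∫ x, r x * η x ∂μ := by
  rw [← integral_const_mul, ← integral_sub (hr.const_mul c) hrη]
  exact integral_congr_ae (ae_of_all μ fun x ↦ by ring)

section CompliantRisk

variable {α : Type*} [MeasurableSpace α] {P : Measure α} [IsFiniteMeasure P] {η r : α → ℝ}
  {f : α → ℤ}

lemma integrable_mul_half_sub (hη : Measurable η) (hr : Measurable r)
    (hη01 : ∀ x, η x ∈ Icc (0:ℝ) 1) (hr01 : ∀ x, r x ∈ Icc (0:ℝ) 1) :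
    Integrable (fun x ↦ r x * (1/2 - η x)) P :=
  .of_mem_Icc (-1/2) (1/2) (by fun_prop) <| ae_of_all P fun x ↦ by
    obtain ⟨hη0, hη1⟩ := hη01 x
    obtain ⟨hr0, hr1⟩ := hr01 x
    constructor <;> nlinarith

lemma integral_compliant_risk_eq {φ : α → α} (hη : Measurable η)
    (hη01 : ∀ x, η x ∈ Icc (0:ℝ) 1) (hBayes : ∀ x, f x = if (1:ℝ)/2 ≤ η x then 1 else -1)
    (hbd : ∀ x, f x = -1 → η (φ x) = 1/2) (hgap : Integrable (fun x ↦ r x * (1/2 - η x)) P) :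
    ∫ x, (if f x = 1 then 1 - η x else r x * (1 - η (φ x)) + (1 - r x) * η x) ∂P
      = ∫ x, (if f x = 1 then 1 - η x else η x) ∂P
        + ∫ x in {x | f x = -1}, r x * (1/2 - η x) ∂P := by
  have hf := measurable_bayes hη hBayes
  have hP_int : Integrable (fun x ↦ if f x = 1 then 1 - η x else η x) P :=
    .of_mem_Icc 0 1 (Measurable.ite (hf (measurableSet_singleton 1)) (by fun_prop) hη).aemeasurable
      (ae_of_all P fun x ↦ by
        split_ifs
        · exact ⟨by linarith [(hη01 x).2], by linarith [(hη01 x).1]⟩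
        · exact hη01 x)
  have hs : MeasurableSet {x | f x = -1} := hf (measurableSet_singleton _)
  rw [← integral_indicator hs, ← integral_add hP_int (hgap.indicator hs)]
  exact integral_congr_ae (ae_of_all P fun x ↦
    compliant_loss_eq_add_indicator (bayes_eq_one_or_eq_neg_one hBayes x) (hbd x))

end CompliantRisk

theorem stmt_3_general {α : Type*} [MeasurableSpace α] (P : Measure α) [IsProbabilityMeasure P]
    (η r : α → ℝ) (f : α → ℤ) (φ : α → α)
    (hη : Measurable η) (hr : Measurable r)
    (hη01 : ∀ x, η x ∈ Set.Icc (0:ℝ) 1) (hr01 : ∀ x, r x ∈ Set.Icc (0:ℝ) 1)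
    (hBayes : ∀ x, f x = if (1:ℝ)/2 ≤ η x then 1 else -1)
    (hbd : ∀ x, f x = -1 → η (φ x) = 1/2)
    (RP RQ : ℝ)
    (hRP : RP = ∫ x, (if f x = 1 then 1 - η x else η x) ∂P)
    (hRQ : RQ = ∫ x, (if f x = 1 then 1 - η x
        else r x * (1 - η (φ x)) + (1 - r x) * η x) ∂P) :
    (RQ = (1/2) * (∫ x in {x | f x = -1}, r x ∂P)
          - (∫ x in {x | f x = -1}, r x * η x ∂P) + RP
      ∧ RP ≤ RQ)
    ∧ ((0 < ∫ x in {x | f x = -1 ∧ η x < 1/2}, r x ∂P) → RP < RQ) := by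
  set s := {x | f x = -1}
  have hs : MeasurableSet s := measurable_bayes hη hBayes (measurableSet_singleton _)
  have hη_lt : ∀ x ∈ s, η x < 1/2 := fun x hx ↦ (bayes_eq_neg_one_iff hBayes x).1 hx
  have hgap_int := integrable_mul_half_sub (P := P) hη hr hη01 hr01
  have hgap : RQ = RP + ∫ x in s, r x * (1/2 - η x) ∂P := by
    rw [hRQ, hRP]
    exact integral_compliant_risk_eq hη hη01 hBayes hbd hgap_int
  have hsplit : ∫ x in s, r x * (1/2 - η x) ∂P
      = 1/2 * (∫ x in s, r x ∂P) - ∫ x in s, r x * η x ∂P := by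
    refine integral_mul_const_sub ?_ ?_ _
    · exact .of_mem_Icc 0 1 hr.aemeasurable (ae_of_all _ hr01)
    · exact .of_mem_Icc 0 1 (hr.mul hη).aemeasurable (ae_of_all _ fun x ↦
        ⟨mul_nonneg (hr01 x).1 (hη01 x).1, mul_le_one₀ (hr01 x).2 (hη01 x).1 (hη01 x).2⟩)
  have hgap_nonneg : 0 ≤ ∫ x in s, r x * (1/2 - η x) ∂P :=
    setIntegral_nonneg hs fun x hx ↦ mul_nonneg (hr01 x).1 (by linarith [hη_lt x hx])
  refine ⟨⟨by linarith, by linarith⟩, fun hpos ↦ ?_⟩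
  have hset : {x | f x = -1 ∧ η x < 1/2} = s := by
    ext x; exact ⟨And.left, fun hx ↦ ⟨hx, hη_lt x hx⟩⟩
  rw [hset] at hpos
  have hgap_pos := integral_mul_pos_of_integral_pos (ae_of_all _ fun x ↦ (hr01 x).1)
    ((ae_restrict_iff' hs).2 (ae_of_all _ fun x hx ↦ sub_pos.2 (hη_lt x hx)))
    hgap_int.integrableOn hpos
  linarith

/-- compliant case, Bayes-optimal classifier.  Points of the negative
class are mapped by `φ` to the decision boundary where `η ∘ φ = 1/2`.  Then
`R_Q = (1/2)·P(B=1,f=-1) - P(B=1,f=-1,Y=+1) + R_P ≥ R_P`, strictly when there is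
positive probability of recourse in `{f = -1}` where `η < 1/2`. -/
theorem stmt_3 {α : Type*} [MeasurableSpace α] (P : Measure α) [IsProbabilityMeasure P]
    (η r : α → ℝ) (f : α → ℤ) (φ : α → α)
    (hη : Measurable η) (hr : Measurable r) (hf : Measurable f) (hφ : Measurable φ)
    (hη01 : ∀ x, η x ∈ Set.Icc (0:ℝ) 1) (hr01 : ∀ x, r x ∈ Set.Icc (0:ℝ) 1)
    (hBayes : ∀ x, f x = if (1:ℝ)/2 ≤ η x then 1 else -1)
    (hbd : ∀ x, f x = -1 → η (φ x) = 1/2)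
    (RP RQ : ℝ)
    (hRP : RP = ∫ x, (if f x = 1 then 1 - η x else η x) ∂P)
    (hRQ : RQ = ∫ x, (if f x = 1 then 1 - η x
        else r x * (1 - η (φ x)) + (1 - r x) * η x) ∂P) :
    (RQ = (1/2) * (∫ x in {x | f x = -1}, r x ∂P)
          - (∫ x in {x | f x = -1}, r x * η x ∂P) + RP
      ∧ RP ≤ RQ)
    ∧ ((0 < ∫ x in {x | f x = -1 ∧ η x < 1/2}, r x ∂P) → RP < RQ) :=
  stmt_3_general P η r f φ hη hr hη01 hr01 hBayes hbd RP RQ hRP hRQ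
end

section
/- In the compliant case with F invariant under recourse, let f̂ minimize R_P over F, let f' ∈ F be the unique classifier with f'(φ_{f'}(x₀)) = f̂(x₀) for all x₀, and define Δ = E_{(X₀,Y)∼P}[ℓ(f̂(X₀),Y)] − E_{(X₀,Y)∼Q_{f'}}[ℓ(f̂(X₀),Y)]. Then min_{f ∈ F} R_{Q_f}(f) ≤ R_{Q_{f'}}(f') = min_{f ∈ F} R_P(f) − Δ. -/
/-!
Since `f'` undoes the recourse map, `f' ∘ φ_{f'} = f̂`, so the post-recourse risk of `f'` is the
risk of `f̂` with the labels drawn at the moved points; and `min_F R_P` is attained at `f̂`.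
The inequality holds because the 0/1 risk is nonnegative, so `R_Q` is bounded below.
-/

open Set MeasureTheory

lemma ite_one_sub_nonneg {p : ℝ} (hp : p ∈ Icc (0 : ℝ) 1) (c : Prop) [Decidable c] :
    0 ≤ if c then 1 - p else p := by
  split <;> linarith [hp.1, hp.2]

lemma csInf_image_eq_of_forall_le {β γ : Type*} [ConditionallyCompleteLattice γ] {R : β → γ}
    {S : Set β} {b : β} (hb : b ∈ S) (hmin : ∀ f ∈ S, R b ≤ R f) : sInf (R '' S) = R b :=
  IsLeast.csInf_eq ⟨mem_image_of_mem R hb, forall_mem_image.2 hmin⟩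

theorem stmt_8_general {α : Type*} [MeasurableSpace α] (P : Measure α)
    (η : α → ℝ) (hη01 : ∀ x, η x ∈ Set.Icc (0:ℝ) 1)
    (F : Set (α → ℤ))
    (φr : (α → ℤ) → α → α)
    (RP RQ : (α → ℤ) → ℝ)
    (hRQ : ∀ f, RQ f = ∫ x, (if f (φr f x) = 1 then 1 - η (φr f x) else η (φr f x)) ∂P)
    (fhat f' : α → ℤ)
    (hfhat : fhat ∈ F ∧ ∀ f ∈ F, RP fhat ≤ RP f)
    (hf' : f' ∈ F ∧ ∀ x, f' (φr f' x) = fhat x)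
    (Δ : ℝ)
    (hΔ : Δ = RP fhat
        - ∫ x, (if fhat x = 1 then 1 - η (φr f' x) else η (φr f' x)) ∂P) :
    sInf (RQ '' F) ≤ RQ f' ∧ RQ f' = sInf (RP '' F) - Δ := by
  have hRQ_nonneg : ∀ f ∈ F, 0 ≤ RQ f := fun f _ ↦ by
    rw [hRQ]
    exact integral_nonneg fun x ↦ ite_one_sub_nonneg (hη01 (φr f x)) _
  have hRQ_f' : RQ f' = ∫ x, (if fhat x = 1 then 1 - η (φr f' x) else η (φr f' x)) ∂P := by
    simp only [hRQ, hf'.2]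
  refine ⟨csInf_le ⟨0, forall_mem_image.2 hRQ_nonneg⟩ ⟨f', hf'.1, rfl⟩, ?_⟩
  rw [csInf_image_eq_of_forall_le hfhat.1 hfhat.2, hΔ, hRQ_f']
  ring

/-- strategizing in the compliant case.  With `fhat` a minimizer of
`R_P` over `F`, `f'` the compensating classifier and `Δ` the resulting change in
risk, `min_{f∈F} R_{Q_f}(f) ≤ R_{Q_{f'}}(f') = min_{f∈F} R_P(f) - Δ`. -/
theorem stmt_8 {α : Type*} [MeasurableSpace α] (P : Measure α) [IsProbabilityMeasure P]
    (η : α → ℝ) (hη01 : ∀ x, η x ∈ Set.Icc (0:ℝ) 1)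
    (F : Set (α → ℤ)) (hFne : F.Nonempty)
    (φr : (α → ℤ) → α → α)
    (hinv : ∀ f ∈ F, ∃! f' : α → ℤ, f' ∈ F ∧ ∀ x, f' (φr f' x) = f x)
    (RP RQ : (α → ℤ) → ℝ)
    (hRP : ∀ f, RP f = ∫ x, (if f x = 1 then 1 - η x else η x) ∂P)
    (hRQ : ∀ f, RQ f = ∫ x, (if f (φr f x) = 1 then 1 - η (φr f x) else η (φr f x)) ∂P)
    (fhat f' : α → ℤ)
    (hfhat : fhat ∈ F ∧ ∀ f ∈ F, RP fhat ≤ RP f)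
    (hf' : f' ∈ F ∧ ∀ x, f' (φr f' x) = fhat x)
    (Δ : ℝ)
    (hΔ : Δ = RP fhat
        - ∫ x, (if fhat x = 1 then 1 - η (φr f' x) else η (φr f' x)) ∂P) :
    sInf (RQ '' F) ≤ RQ f' ∧ RQ f' = sInf (RP '' F) - Δ :=
  stmt_8_general P η hη01 F φr RP RQ hRQ fhat f' hfhat hf' Δ hΔ
end

section
/- For linear classifiers f_{θ,θ₀}(x) = sign(xᵀθ + θ₀) (with sign(z) = +1 for z ≥ 0, −1 otherwise) and the recourse map that assigns class +1 to any point within Euclidean distance D > 0 of the decision boundary of the deployed classifier, the class of linear classifiers is invariant under recourse: setting θ₀' = θ₀ − D‖θ‖, for all x₀ ∈ ℝ^d one has f_{θ,θ₀'}(φ(f_{θ,θ₀'}, x₀)) = f_{θ,θ₀}(x₀). -/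
open scoped RealInnerProductSpace

theorem signedDist_le_iff_of_shifted_bias {E : Type*} [NormedAddCommGroup E]
    [InnerProductSpace ℝ E] {θ : E} (hθ : θ ≠ 0) (x₀ : E) (θ₀ D : ℝ) :
    (-⟪x₀, θ⟫ - (θ₀ - D * ‖θ‖)) / ‖θ‖ ≤ D ↔ 0 ≤ ⟪x₀, θ⟫ + θ₀ := by
  rw [div_le_iff₀ (norm_pos_iff.mpr hθ)]
  constructor <;> intro h <;> linarith

theorem stmt_9_general {d : ℕ} (θ : EuclideanSpace ℝ (Fin d)) (hθ : θ ≠ 0)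
    (θ₀ D : ℝ) (θ₀' : ℝ) (hθ₀' : θ₀' = θ₀ - D * ‖θ‖) :
    ∀ x₀ : EuclideanSpace ℝ (Fin d),
      ((-⟪x₀, θ⟫ - θ₀') / ‖θ‖ ≤ D ↔ 0 ≤ ⟪x₀, θ⟫ + θ₀)
      ∧ ((if (-⟪x₀, θ⟫ - θ₀') / ‖θ‖ ≤ D then (1:ℤ) else -1)
          = (if 0 ≤ ⟪x₀, θ⟫ + θ₀ then (1:ℤ) else -1)) := by
  intro x₀
  subst hθ₀'
  have key := signedDist_le_iff_of_shifted_bias hθ x₀ θ₀ D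
  exact ⟨key, if_congr key rfl rfl⟩

/-- linear classifiers are invariant under recourse.  With
`θ₀' = θ₀ - D‖θ‖`, recourse with the shifted classifier (assigning +1 to any
point within signed distance `D` of its boundary) reproduces the original
classifier: `(-⟪x₀,θ⟫ - θ₀')/‖θ‖ ≤ D ↔ x₀ᵀθ + θ₀ ≥ 0`, i.e.
`f_{θ,θ₀'}(φ(f_{θ,θ₀'},x₀)) = f_{θ,θ₀}(x₀)`. -/
theorem stmt_9 {d : ℕ} (θ : EuclideanSpace ℝ (Fin d)) (hθ : θ ≠ 0)
    (θ₀ D : ℝ) (hD : 0 < D) (θ₀' : ℝ) (hθ₀' : θ₀' = θ₀ - D * ‖θ‖) :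
    ∀ x₀ : EuclideanSpace ℝ (Fin d),
      ((-⟪x₀, θ⟫ - θ₀') / ‖θ‖ ≤ D ↔ 0 ≤ ⟪x₀, θ⟫ + θ₀)
      ∧ ((if (-⟪x₀, θ⟫ - θ₀') / ‖θ‖ ≤ D then (1:ℤ) else -1)
          = (if 0 ≤ ⟪x₀, θ⟫ + θ₀ then (1:ℤ) else -1)) :=
  stmt_9_general θ hθ θ₀ D θ₀' hθ₀'
end

section
/- In the two-Gaussian linear classification example, the quantity Δ of Definition (compliant strategizing) is strictly positive: for the compensating classifier f' = f_{θ, θ₀ − D‖θ‖} and x₀ in the band A = {x : 0 ≤ xᵀθ + θ₀ < D‖θ‖}, projecting x₀ onto the decision boundary of f' strictly increases θᵀx + θ₀, and since t ↦ 1/(1+e^t) is strictly decreasing, P(Y=−1 | X₀ = φ_{f'}(x₀)) < P(Y=−1 | X₀ = x₀) for each such x₀; hence Δ > 0 whenever P(X₀ ∈ A) > 0. -/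
open Set MeasureTheory
open Real
open scoped RealInnerProductSpace

/-!
Projecting `x₀` onto the boundary `{θᵀx + θ₀' = 0}` of the compensating classifier moves the
score `θᵀx + θ₀` to exactly `D‖θ‖`, which on the band `A` is strictly larger than the score of
`x₀`. The posterior `1 / (1 + exp t)` is the strictly decreasing `σ(-t)`, so the integrand of `Δ`
is strictly positive on `A`, and a strictly positive bounded integrand over a set of positive
measure has positive integral.
-/

lemma one_div_one_add_exp_eq_sigmoid_neg (t : ℝ) : 1 / (1 + exp t) = sigmoid (-t) := by
  rw [sigmoid_def, neg_neg, one_div]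

lemma norm_sigmoid_sub_sigmoid_le_one (a b : ℝ) : ‖sigmoid a - sigmoid b‖ ≤ 1 := by
  rw [Real.norm_eq_abs, abs_sub_le_iff]
  constructor <;> linarith [sigmoid_pos a, sigmoid_pos b, sigmoid_lt_one a, sigmoid_lt_one b]

lemma inner_sub_smul_div_norm_sq {E : Type*} [NormedAddCommGroup E] [InnerProductSpace ℝ E]
    {θ : E} (hθ : θ ≠ 0) (x : E) (c : ℝ) :
    ⟪θ, x - ((⟪x, θ⟫ + c) / ‖θ‖ ^ 2) • θ⟫ = -c := by
  have : ‖θ‖ ^ 2 ≠ 0 := by positivity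
  rw [inner_sub_right, real_inner_smul_right, real_inner_self_eq_norm_sq, real_inner_comm,
    div_mul_cancel₀ _ this]
  ring

lemma setIntegral_pos_of_forall_pos {α : Type*} [MeasurableSpace α] {μ : Measure α}
    {s : Set α} {f : α → ℝ} (hs : MeasurableSet s) (hfi : IntegrableOn f s μ)
    (hpos : ∀ x ∈ s, 0 < f x) (hμ : 0 < μ s) : 0 < ∫ x in s, f x ∂μ := by
  have hnn : 0 ≤ᵐ[μ.restrict s] f := (ae_restrict_mem hs).mono fun x hx => (hpos x hx).le
  rw [setIntegral_pos_iff_support_of_nonneg_ae hnn hfi]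
  exact hμ.trans_le (measure_mono fun x hx => ⟨(hpos x hx).ne', hx⟩)

theorem stmt_18_general {d : ℕ}
    (P : Measure (EuclideanSpace ℝ (Fin d))) [IsProbabilityMeasure P]
    (θ : EuclideanSpace ℝ (Fin d)) (θ₀ D : ℝ)
    (pm : EuclideanSpace ℝ (Fin d) → ℝ)
    (hpm : ∀ x, pm x = 1 / (1 + Real.exp (⟪θ, x⟫ + θ₀)))
    (A : Set (EuclideanSpace ℝ (Fin d)))
    (hA : A = {x | 0 ≤ ⟪θ, x⟫ + θ₀ ∧ ⟪θ, x⟫ + θ₀ < D * ‖θ‖})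
    (θ₀' : ℝ) (hθ₀' : θ₀' = θ₀ - D * ‖θ‖)
    (φ' : EuclideanSpace ℝ (Fin d) → EuclideanSpace ℝ (Fin d))
    (hφ' : ∀ x, φ' x = x - ((⟪x, θ⟫ + θ₀') / ‖θ‖ ^ 2) • θ)
    (Δ : ℝ) (hΔ : Δ = ∫ x in A, (pm x - pm (φ' x)) ∂P) :
    (∀ x ∈ A, ⟪θ, x⟫ + θ₀ < ⟪θ, φ' x⟫ + θ₀ ∧ pm (φ' x) < pm x)
    ∧ (0 < P A → 0 < Δ) := by
  have hpm' : pm = fun x => sigmoid (-(⟪θ, x⟫ + θ₀)) :=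
    funext fun x => (hpm x).trans (one_div_one_add_exp_eq_sigmoid_neg _)
  have hscore : ∀ x ∈ A, ⟪θ, x⟫ + θ₀ < ⟪θ, φ' x⟫ + θ₀ := by
    intro x hx
    rw [hA] at hx
    obtain ⟨hnonneg, hlt⟩ := hx
    have hθ : θ ≠ 0 := by
      rintro rfl
      simp only [norm_zero, mul_zero] at hlt
      linarith
    rw [hφ', inner_sub_smul_div_norm_sq hθ, hθ₀']
    linarith
  have hpost : ∀ x ∈ A, pm (φ' x) < pm x := fun x hx => by
    simpa only [hpm'] using sigmoid_lt (neg_lt_neg (hscore x hx))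
  refine ⟨fun x hx => ⟨hscore x hx, hpost x hx⟩, fun hPA => hΔ ▸ ?_⟩
  have hAmeas : MeasurableSet A := by
    rw [hA]
    measurability
  have hφ'cont : Continuous φ' := by
    rw [funext hφ']
    fun_prop
  have hint : Integrable (fun x => pm x - pm (φ' x)) P := by
    refine .of_bound ?_ 1 (ae_of_all _ fun x => ?_)
    · rw [hpm']
      fun_prop
    · simp only [hpm']
      exact norm_sigmoid_sub_sigmoid_le_one _ _
  exact setIntegral_pos_of_forall_pos hAmeas hint.integrableOn
    (fun x hx => sub_pos.2 (hpost x hx)) hPA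

/-- in the two-Gaussian linear example, for each `x₀` in the band
`A`, projecting onto the boundary of the compensating classifier strictly
increases `θᵀx + θ₀`, hence strictly decreases the posterior
`P(Y=-1|X₀=x) = 1/(1+exp(θᵀx+θ₀))`; consequently `Δ > 0` whenever `P(A) > 0`. -/
theorem stmt_18 {d : ℕ}
    (P : Measure (EuclideanSpace ℝ (Fin d))) [IsProbabilityMeasure P]
    (θ : EuclideanSpace ℝ (Fin d)) (hθ : θ ≠ 0) (θ₀ D : ℝ) (hD : 0 < D)
    (pm : EuclideanSpace ℝ (Fin d) → ℝ)
    (hpm : ∀ x, pm x = 1 / (1 + Real.exp (⟪θ, x⟫ + θ₀)))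
    (A : Set (EuclideanSpace ℝ (Fin d)))
    (hA : A = {x | 0 ≤ ⟪θ, x⟫ + θ₀ ∧ ⟪θ, x⟫ + θ₀ < D * ‖θ‖})
    (θ₀' : ℝ) (hθ₀' : θ₀' = θ₀ - D * ‖θ‖)
    (φ' : EuclideanSpace ℝ (Fin d) → EuclideanSpace ℝ (Fin d))
    (hφ' : ∀ x, φ' x = x - ((⟪x, θ⟫ + θ₀') / ‖θ‖ ^ 2) • θ)
    (Δ : ℝ) (hΔ : Δ = ∫ x in A, (pm x - pm (φ' x)) ∂P) :
    (∀ x ∈ A, ⟪θ, x⟫ + θ₀ < ⟪θ, φ' x⟫ + θ₀ ∧ pm (φ' x) < pm x)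
    ∧ (0 < P A → 0 < Δ) :=
  stmt_18_general P θ θ₀ D pm hpm A hA θ₀' hθ₀' φ' hφ' Δ hΔ
end
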